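/- Let α : S¹ × [Φ₋, Φ₊] → ℝ² be a smooth map with α*(dx∧dy) = −dΦ∧dΘ (where Θ parametrizes S¹ and Φ the interval), and suppose the curve S¹₀ = α(S¹ × {0}) satisfies ∮_{S¹₀} x dy = 0. Then for any smooth function Φ : S¹ → [Φ₋, Φ₊], the graph map Θ ↦ α(Θ, Φ(Θ)) pulls back the 1-form x dy on ℝ² to a 1-form on S¹ whose integral equals −∮_{S¹} Φ dΘ. -/

import Mathlib

open MeasureTheory intervalIntegral Set ContinuousLinearMap

lemma swap_cont (f : ℝ × ℝ → ℝ) (hf : Continuous f) :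
    ∫ Θ in (0:ℝ)..1, ∫ t in (0:ℝ)..1, f (t, Θ) = ∫ t in (0:ℝ)..1, ∫ Θ in (0:ℝ)..1, f (t, Θ) := by
  have h01 : (0:ℝ) ≤ 1 := zero_le_one
  simp only [intervalIntegral.integral_of_le h01]
  have hint : Integrable (Function.uncurry fun Θ t => f (t, Θ))
      ((volume.restrict (Ioc (0:ℝ) 1)).prod (volume.restrict (Ioc (0:ℝ) 1))) := by
    rw [Measure.prod_restrict]
    have hc : Continuous (Function.uncurry fun Θ t : ℝ => f (t, Θ)) :=
      hf.comp continuous_swap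
    have : IntegrableOn (Function.uncurry fun Θ t : ℝ => f (t, Θ))
        (Icc (0:ℝ) 1 ×ˢ Icc (0:ℝ) 1) volume :=
      hc.continuousOn.integrableOn_compact ((isCompact_Icc).prod isCompact_Icc)
    exact this.mono_set (Set.prod_mono Ioc_subset_Icc_self Ioc_subset_Icc_self)
  exact MeasureTheory.integral_integral_swap hint

/-- Gromov's figure-eight area computation. Let `α : S¹ × [Φ₋,Φ₊] → ℝ²` (with `S¹`
modelled by `1`-periodicity in the first variable) satisfy `α*(dx∧dy) = −dΦ∧dΘ`, i.e. the
Jacobian determinant of `α` with respect to `(Θ,Φ)` equals `1`, and suppose the curve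
`S¹₀ = α(S¹ × {0})` bounds zero area: `∮_{S¹₀} x dy = 0`. Then for any smooth
`1`-periodic `Φ : S¹ → [Φ₋,Φ₊]`, the graph map `Θ ↦ α(Θ, Φ(Θ))` pulls back `x dy` to a
form with `∮ = −∮ Φ dΘ`. -/
theorem stmt15 (α : ℝ × ℝ → ℝ × ℝ) (Φlo Φhi : ℝ) (hlo : Φlo ≤ 0) (hhi : 0 ≤ Φhi)
    (hα : ContDiff ℝ (⊤ : ℕ∞) α) (hper : ∀ Θ Φ, α (Θ + 1, Φ) = α (Θ, Φ))
    (hjac : ∀ Θ Φ, (fderiv ℝ α (Θ, Φ) (1, 0)).1 * (fderiv ℝ α (Θ, Φ) (0, 1)).2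
      - (fderiv ℝ α (Θ, Φ) (0, 1)).1 * (fderiv ℝ α (Θ, Φ) (1, 0)).2 = 1)
    (hzero : ∫ Θ in (0:ℝ)..1, (α (Θ, 0)).1 * deriv (fun s => (α (s, 0)).2) Θ = 0)
    (Φf : ℝ → ℝ) (hΦ : ContDiff ℝ (⊤ : ℕ∞) Φf) (hΦper : ∀ Θ, Φf (Θ + 1) = Φf Θ)
    (hΦrange : ∀ Θ, Φf Θ ∈ Set.Icc Φlo Φhi) :
    ∫ Θ in (0:ℝ)..1, (α (Θ, Φf Θ)).1 * deriv (fun s => (α (s, Φf s)).2) Θ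
      = - ∫ Θ in (0:ℝ)..1, Φf Θ := by
  set G : ℝ × ℝ → ℝ × ℝ := fun p => α (p.2, p.1 * Φf p.2) with hGdef
  have hGsm : ContDiff ℝ (⊤ : ℕ∞) G :=
    hα.comp (contDiff_snd.prodMk (contDiff_fst.mul (hΦ.comp contDiff_snd)))
  have hΦd : ∀ s, HasDerivAt Φf (deriv Φf s) s := fun s =>
    ((hΦ.differentiable (by simp)) s).hasDerivAt
  -- derivative of inner map
  have hφ : ∀ p : ℝ × ℝ, HasFDerivAt (fun q : ℝ × ℝ => ((q.2, q.1 * Φf q.2) : ℝ × ℝ))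
      ((ContinuousLinearMap.snd ℝ ℝ ℝ).prod
        (p.1 • (deriv Φf p.2 • ContinuousLinearMap.snd ℝ ℝ ℝ) +
          Φf p.2 • ContinuousLinearMap.fst ℝ ℝ ℝ)) p := by
    intro p
    apply HasFDerivAt.prodMk (hasFDerivAt_snd)
    exact (hasFDerivAt_fst).mul ((hΦd p.2).comp_hasFDerivAt p hasFDerivAt_snd)
  have hDG : ∀ p : ℝ × ℝ, HasFDerivAt G
      ((fderiv ℝ α (p.2, p.1 * Φf p.2)).comp
        ((ContinuousLinearMap.snd ℝ ℝ ℝ).prod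
          (p.1 • (deriv Φf p.2 • ContinuousLinearMap.snd ℝ ℝ ℝ) +
            Φf p.2 • ContinuousLinearMap.fst ℝ ℝ ℝ))) p := fun p =>
    ((hα.differentiable (by simp) _).hasFDerivAt).comp p (hφ p)
  have hD1 : ∀ p : ℝ × ℝ, fderiv ℝ G p (1, 0)
      = Φf p.2 • fderiv ℝ α (p.2, p.1 * Φf p.2) (0, 1) := by
    intro p
    rw [(hDG p).fderiv]
    simp only [ContinuousLinearMap.comp_apply, ContinuousLinearMap.prod_apply,
      ContinuousLinearMap.smul_apply, ContinuousLinearMap.add_apply,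
      ContinuousLinearMap.coe_fst', ContinuousLinearMap.coe_snd', smul_eq_mul,
      mul_zero, mul_one, add_zero, zero_add, mul_comm]
    rw [show ((0:ℝ), Φf p.2) = Φf p.2 • ((0:ℝ), (1:ℝ)) by simp,
      (fderiv ℝ α (p.2, p.1 * Φf p.2)).map_smul]
  have hD2 : ∀ p : ℝ × ℝ, fderiv ℝ G p (0, 1)
      = fderiv ℝ α (p.2, p.1 * Φf p.2) (1, 0)
        + (p.1 * deriv Φf p.2) • fderiv ℝ α (p.2, p.1 * Φf p.2) (0, 1) := by
    intro p
    rw [(hDG p).fderiv]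
    simp only [ContinuousLinearMap.comp_apply, ContinuousLinearMap.prod_apply,
      ContinuousLinearMap.smul_apply, ContinuousLinearMap.add_apply,
      ContinuousLinearMap.coe_fst', ContinuousLinearMap.coe_snd', smul_eq_mul,
      mul_zero, mul_one, add_zero, zero_add]
    rw [show ((1:ℝ), p.1 * deriv Φf p.2) = ((1:ℝ),(0:ℝ)) + (p.1 * deriv Φf p.2) • ((0:ℝ), (1:ℝ)) by simp,
      (fderiv ℝ α (p.2, p.1 * Φf p.2)).map_add,
      (fderiv ℝ α (p.2, p.1 * Φf p.2)).map_smul]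
  -- second derivative
  have hDsm : ContDiff ℝ (⊤ : ℕ∞) (fderiv ℝ G) := hGsm.fderiv_right (by simp)
  have hf'' : ∀ p : ℝ × ℝ, HasFDerivAt (fderiv ℝ G) (fderiv ℝ (fderiv ℝ G) p) p := fun p =>
    ((hDsm.differentiable (by simp)) p).hasFDerivAt
  have hsymm : ∀ p v w, fderiv ℝ (fderiv ℝ G) p v w = fderiv ℝ (fderiv ℝ G) p w v := fun p =>
    second_derivative_symmetric (fun q => ((hGsm.differentiable (by simp)) q).hasFDerivAt) (hf'' p)
  -- component extraction helpers
  have hfst : ∀ {F : ℝ → ℝ × ℝ} {v : ℝ × ℝ} {t : ℝ}, HasDerivAt F v t →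
      HasDerivAt (fun s => (F s).1) v.1 t := fun h =>
    ((ContinuousLinearMap.fst ℝ ℝ ℝ).hasFDerivAt).comp_hasDerivAt _ h
  have hsnd : ∀ {F : ℝ → ℝ × ℝ} {v : ℝ × ℝ} {t : ℝ}, HasDerivAt F v t →
      HasDerivAt (fun s => (F s).2) v.2 t := fun h =>
    ((ContinuousLinearMap.snd ℝ ℝ ℝ).hasFDerivAt).comp_hasDerivAt _ h
  -- slice curves
  have hcT : ∀ (Θ t : ℝ), HasDerivAt (fun s => G (s, Θ)) (fderiv ℝ G (t, Θ) (1, 0)) t :=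
    fun Θ t => (((hGsm.differentiable (by simp)) (t, Θ)).hasFDerivAt).comp_hasDerivAt (l := G) t
      ((hasDerivAt_id t).prodMk (hasDerivAt_const t Θ))
  have hcS : ∀ (t Θ : ℝ), HasDerivAt (fun s => G (t, s)) (fderiv ℝ G (t, Θ) (0, 1)) Θ :=
    fun t Θ => (((hGsm.differentiable (by simp)) (t, Θ)).hasFDerivAt).comp_hasDerivAt (l := G) Θ
      ((hasDerivAt_const Θ t).prodMk (hasDerivAt_id Θ))
  -- derivative of t ↦ A(t,Θ)
  have hAslice : ∀ (Θ t : ℝ), HasDerivAt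
      (fun s => (G (s, Θ)).1 * (fderiv ℝ G (s, Θ) (0, 1)).2)
      ((fderiv ℝ G (t, Θ) (1, 0)).1 * (fderiv ℝ G (t, Θ) (0, 1)).2
        + (G (t, Θ)).1 * (fderiv ℝ (fderiv ℝ G) (t, Θ) (1, 0) (0, 1)).2) t := by
    intro Θ t
    have hDc : HasDerivAt (fun s => fderiv ℝ G (s, Θ)) (fderiv ℝ (fderiv ℝ G) (t, Θ) (1, 0)) t :=
      (hf'' (t, Θ)).comp_hasDerivAt t ((hasDerivAt_id t).prodMk (hasDerivAt_const t Θ))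
    have h2 : HasDerivAt (fun s => fderiv ℝ G (s, Θ) (0, 1))
        (fderiv ℝ (fderiv ℝ G) (t, Θ) (1, 0) (0, 1)) t := by
      simpa using hDc.clm_apply (hasDerivAt_const t ((0:ℝ), (1:ℝ)))
    exact (hfst (hcT Θ t)).mul (hsnd h2)
  -- derivative of Θ ↦ B(t,Θ)
  have hBslice : ∀ (t Θ : ℝ), HasDerivAt
      (fun s => (G (t, s)).1 * (fderiv ℝ G (t, s) (1, 0)).2)
      ((fderiv ℝ G (t, Θ) (0, 1)).1 * (fderiv ℝ G (t, Θ) (1, 0)).2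
        + (G (t, Θ)).1 * (fderiv ℝ (fderiv ℝ G) (t, Θ) (0, 1) (1, 0)).2) Θ := by
    intro t Θ
    have hDc : HasDerivAt (fun s => fderiv ℝ G (t, s)) (fderiv ℝ (fderiv ℝ G) (t, Θ) (0, 1)) Θ :=
      (hf'' (t, Θ)).comp_hasDerivAt Θ ((hasDerivAt_const Θ t).prodMk (hasDerivAt_id Θ))
    have h2 : HasDerivAt (fun s => fderiv ℝ G (t, s) (1, 0))
        (fderiv ℝ (fderiv ℝ G) (t, Θ) (0, 1) (1, 0)) Θ := by
      simpa using hDc.clm_apply (hasDerivAt_const Θ ((1:ℝ), (0:ℝ)))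
    exact (hfst (hcS t Θ)).mul (hsnd h2)
  -- key pointwise identity
  have hkey : ∀ p : ℝ × ℝ,
      (fderiv ℝ G p (1, 0)).1 * (fderiv ℝ G p (0, 1)).2
        + (G p).1 * (fderiv ℝ (fderiv ℝ G) p (1, 0) (0, 1)).2
      = ((fderiv ℝ G p (0, 1)).1 * (fderiv ℝ G p (1, 0)).2
        + (G p).1 * (fderiv ℝ (fderiv ℝ G) p (0, 1) (1, 0)).2) - Φf p.2 := by
    intro p
    rw [hsymm p (0, 1) (1, 0), hD1 p, hD2 p]
    simp only [Prod.fst_add, Prod.snd_add, Prod.smul_fst, Prod.smul_snd, smul_eq_mul]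
    linear_combination (-(Φf p.2)) * hjac p.2 (p.1 * Φf p.2)
  -- periodicity
  have hGper2 : ∀ p : ℝ × ℝ, G (p + ((0:ℝ), (1:ℝ))) = G p := by
    intro p
    show α ((p + ((0:ℝ),(1:ℝ))).2, (p + ((0:ℝ),(1:ℝ))).1 * Φf (p + ((0:ℝ),(1:ℝ))).2) = _
    simp [hΦper, hper, hGdef]
  have hDper : ∀ p : ℝ × ℝ, fderiv ℝ G (p + ((0:ℝ), (1:ℝ))) = fderiv ℝ G p := by
    intro p
    have htr : HasFDerivAt (fun q : ℝ × ℝ => q + ((0:ℝ), (1:ℝ)))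
        (ContinuousLinearMap.id ℝ (ℝ × ℝ)) p := (hasFDerivAt_id p).add_const _
    have h1 : HasFDerivAt (fun q : ℝ × ℝ => G (q + ((0:ℝ), (1:ℝ))))
        ((fderiv ℝ G (p + ((0:ℝ), (1:ℝ)))).comp (ContinuousLinearMap.id ℝ (ℝ × ℝ))) p :=
      (((hGsm.differentiable (by simp)) _).hasFDerivAt).comp p htr
    rw [ContinuousLinearMap.comp_id] at h1
    have : (fun q : ℝ × ℝ => G (q + ((0:ℝ), (1:ℝ)))) = G := funext fun q => hGper2 q
    rw [this] at h1
    exact (h1.fderiv).symm ▸ rfl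
  -- continuity facts
  have hDDsm : ContDiff ℝ (⊤ : ℕ∞) (fderiv ℝ (fderiv ℝ G)) := hDsm.fderiv_right (by simp)
  have hcx : Continuous fun p : ℝ × ℝ => (G p).1 := continuous_fst.comp hGsm.continuous
  have hcD : ∀ v : ℝ × ℝ, Continuous fun p : ℝ × ℝ => fderiv ℝ G p v := fun v =>
    (hDsm.continuous).clm_apply continuous_const
  have hcDD : ∀ v w : ℝ × ℝ, Continuous fun p : ℝ × ℝ => fderiv ℝ (fderiv ℝ G) p v w :=
    fun v w => ((hDDsm.continuous).clm_apply continuous_const).clm_apply continuous_const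
  have hcdA : Continuous fun p : ℝ × ℝ =>
      (fderiv ℝ G p (1, 0)).1 * (fderiv ℝ G p (0, 1)).2
        + (G p).1 * (fderiv ℝ (fderiv ℝ G) p (1, 0) (0, 1)).2 :=
    ((continuous_fst.comp (hcD (1,0))).mul (continuous_snd.comp (hcD (0,1)))).add
      (hcx.mul (continuous_snd.comp (hcDD (1,0) (0,1))))
  have hcdB : Continuous fun p : ℝ × ℝ =>
      (fderiv ℝ G p (0, 1)).1 * (fderiv ℝ G p (1, 0)).2
        + (G p).1 * (fderiv ℝ (fderiv ℝ G) p (0, 1) (1, 0)).2 :=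
    ((continuous_fst.comp (hcD (0,1))).mul (continuous_snd.comp (hcD (1,0)))).add
      (hcx.mul (continuous_snd.comp (hcDD (0,1) (1,0))))
  -- FTC in t
  have hFTCt : ∀ Θ : ℝ, ∫ t in (0:ℝ)..1,
      ((fderiv ℝ G (t, Θ) (1, 0)).1 * (fderiv ℝ G (t, Θ) (0, 1)).2
        + (G (t, Θ)).1 * (fderiv ℝ (fderiv ℝ G) (t, Θ) (1, 0) (0, 1)).2)
      = (G (1, Θ)).1 * (fderiv ℝ G (1, Θ) (0, 1)).2
        - (G (0, Θ)).1 * (fderiv ℝ G (0, Θ) (0, 1)).2 := by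
    intro Θ
    refine intervalIntegral.integral_eq_sub_of_hasDerivAt (fun t _ => hAslice Θ t) ?_
    exact (hcdA.comp (continuous_id.prodMk continuous_const)).intervalIntegrable 0 1
  -- FTC in Θ and periodicity
  have hFTCΘ : ∀ t : ℝ, ∫ Θ in (0:ℝ)..1,
      ((fderiv ℝ G (t, Θ) (0, 1)).1 * (fderiv ℝ G (t, Θ) (1, 0)).2
        + (G (t, Θ)).1 * (fderiv ℝ (fderiv ℝ G) (t, Θ) (0, 1) (1, 0)).2) = 0 := by
    intro t
    have := intervalIntegral.integral_eq_sub_of_hasDerivAt (fun Θ _ => hBslice t Θ)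
      ((hcdB.comp (continuous_const.prodMk continuous_id)).intervalIntegrable 0 1)
    rw [this]
    have h10 : ((t, (1:ℝ)) : ℝ × ℝ) = (t, (0:ℝ)) + ((0:ℝ), (1:ℝ)) := by simp
    rw [h10, hGper2, hDper]
    ring
  -- relate goal integrands to G
  have hcA : Continuous fun p : ℝ × ℝ => (G p).1 * (fderiv ℝ G p (0, 1)).2 :=
    hcx.mul (continuous_snd.comp (hcD (0, 1)))
  have hA1eq : ∀ Θ : ℝ, (α (Θ, Φf Θ)).1 * deriv (fun s => (α (s, Φf s)).2) Θ
      = (G (1, Θ)).1 * (fderiv ℝ G (1, Θ) (0, 1)).2 := by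
    intro Θ
    have hfun : (fun s => (α (s, Φf s)).2) = fun s => (G (1, s)).2 := by
      funext s; simp [hGdef]
    have hd : deriv (fun s => (G (1, s)).2) Θ = (fderiv ℝ G (1, Θ) (0, 1)).2 :=
      (hsnd (hcS 1 Θ)).deriv
    rw [hfun, hd]
    have : (α (Θ, Φf Θ)).1 = (G (1, Θ)).1 := by simp [hGdef]
    rw [this]
  have hA0eq : ∀ Θ : ℝ, (α (Θ, 0)).1 * deriv (fun s => (α (s, 0)).2) Θ
      = (G (0, Θ)).1 * (fderiv ℝ G (0, Θ) (0, 1)).2 := by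
    intro Θ
    have hfun : (fun s => (α (s, 0)).2) = fun s => (G (0, s)).2 := by
      funext s; simp [hGdef]
    have hd : deriv (fun s => (G (0, s)).2) Θ = (fderiv ℝ G (0, Θ) (0, 1)).2 :=
      (hsnd (hcS 0 Θ)).deriv
    rw [hfun, hd]
    have : (α (Θ, 0)).1 = (G (0, Θ)).1 := by simp [hGdef]
    rw [this]
  have hzero' : ∫ Θ in (0:ℝ)..1, (G (0, Θ)).1 * (fderiv ℝ G (0, Θ) (0, 1)).2 = 0 := by
    rw [← intervalIntegral.integral_congr (fun Θ _ => hA0eq Θ)]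
    exact hzero
  -- inner computation for each t
  have hinner : ∀ t : ℝ, (∫ Θ in (0:ℝ)..1,
      ((fderiv ℝ G (t, Θ) (1, 0)).1 * (fderiv ℝ G (t, Θ) (0, 1)).2
        + (G (t, Θ)).1 * (fderiv ℝ (fderiv ℝ G) (t, Θ) (1, 0) (0, 1)).2))
      = - ∫ Θ in (0:ℝ)..1, Φf Θ := by
    intro t
    rw [intervalIntegral.integral_congr (g := fun Θ =>
      ((fderiv ℝ G (t, Θ) (0, 1)).1 * (fderiv ℝ G (t, Θ) (1, 0)).2
        + (G (t, Θ)).1 * (fderiv ℝ (fderiv ℝ G) (t, Θ) (0, 1) (1, 0)).2) - Φf Θ)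
      (fun Θ _ => hkey (t, Θ))]
    have hIB : IntervalIntegrable (fun Θ : ℝ =>
        (fderiv ℝ G (t, Θ) (0, 1)).1 * (fderiv ℝ G (t, Θ) (1, 0)).2
          + (G (t, Θ)).1 * (fderiv ℝ (fderiv ℝ G) (t, Θ) (0, 1) (1, 0)).2) volume 0 1 :=
      Continuous.intervalIntegrable
        (by exact hcdB.comp (continuous_const.prodMk continuous_id)) 0 1
    rw [intervalIntegral.integral_sub hIB ((hΦ.continuous).intervalIntegrable 0 1),
      hFTCΘ t, zero_sub]
  -- Fubini swap
  have hswap := swap_cont _ hcdA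
  -- main chain
  have hmain : ∫ Θ in (0:ℝ)..1,
      ((G (1, Θ)).1 * (fderiv ℝ G (1, Θ) (0, 1)).2
        - (G (0, Θ)).1 * (fderiv ℝ G (0, Θ) (0, 1)).2) = - ∫ Θ in (0:ℝ)..1, Φf Θ := by
    rw [intervalIntegral.integral_congr (g := fun Θ => ∫ t in (0:ℝ)..1,
      ((fderiv ℝ G (t, Θ) (1, 0)).1 * (fderiv ℝ G (t, Θ) (0, 1)).2
        + (G (t, Θ)).1 * (fderiv ℝ (fderiv ℝ G) (t, Θ) (1, 0) (0, 1)).2))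
      (fun Θ _ => (hFTCt Θ).symm)]
    rw [hswap]
    rw [intervalIntegral.integral_congr (g := fun _ => - ∫ Θ in (0:ℝ)..1, Φf Θ)
      (fun t _ => hinner t)]
    simp
  have hsplit : ∫ Θ in (0:ℝ)..1,
      ((G (1, Θ)).1 * (fderiv ℝ G (1, Θ) (0, 1)).2
        - (G (0, Θ)).1 * (fderiv ℝ G (0, Θ) (0, 1)).2)
      = (∫ Θ in (0:ℝ)..1, (G (1, Θ)).1 * (fderiv ℝ G (1, Θ) (0, 1)).2)
        - ∫ Θ in (0:ℝ)..1, (G (0, Θ)).1 * (fderiv ℝ G (0, Θ) (0, 1)).2 :=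
    intervalIntegral.integral_sub
      ((hcA.comp (continuous_const.prodMk continuous_id)).intervalIntegrable 0 1)
      ((hcA.comp (continuous_const.prodMk continuous_id)).intervalIntegrable 0 1)
  rw [intervalIntegral.integral_congr (fun Θ _ => hA1eq Θ)]
  rw [hsplit, hzero', sub_zero] at hmain
  exact hmain
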